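/- For α ≠ 0, the bracket {f,g}(q) = ∇f(q)ᵀ J(q) ∇g(q), with J(q) = (1/α)·[[0, z, -y, 0, 0], [-z, 0, x, 0, 0], [y, -x, 0, 0, 0], [0, 0, 0, 0, α], [0, 0, 0, -α, 0]], satisfies the Jacobi identity {f,{g,h}} + {g,{h,f}} + {h,{f,g}} = 0 for all smooth (or polynomial) functions f, g, h on ℝ⁵. -/

import Mathlib

/-- The gradient of a function on ℝ⁵. -/
noncomputable def grad5 (f : (Fin 5 → ℝ) → ℝ) (q : Fin 5 → ℝ) : Fin 5 → ℝ :=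
  fun i => fderiv ℝ f q (Pi.single i 1)

/-- The degenerate Poisson matrix J(q). -/
noncomputable def Jmat (α : ℝ) (q : Fin 5 → ℝ) : Matrix (Fin 5) (Fin 5) ℝ :=
  (1/α) • !![0, q 2, -q 1, 0, 0;
             -q 2, 0, q 0, 0, 0;
             q 1, -q 0, 0, 0, 0;
             0, 0, 0, 0, α;
             0, 0, 0, -α, 0]

/-- The bracket {f,g}(q) = ∇f(q)ᵀ J(q) ∇g(q). -/
noncomputable def pbracket (α : ℝ) (f g : (Fin 5 → ℝ) → ℝ) (q : Fin 5 → ℝ) : ℝ :=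
  ∑ i, ∑ j, grad5 f q i * Jmat α q i j * grad5 g q j


noncomputable def D1 (u : (Fin 5 → ℝ) → ℝ) (q : Fin 5 → ℝ) (i : Fin 5) : ℝ :=
  fderiv ℝ u q (Pi.single i 1)
noncomputable def D2 (u : (Fin 5 → ℝ) → ℝ) (q : Fin 5 → ℝ) (i k : Fin 5) : ℝ :=
  fderiv ℝ (fderiv ℝ u) q (Pi.single k 1) (Pi.single i 1)

lemma D2_symm {u : (Fin 5 → ℝ) → ℝ} (hu : ContDiff ℝ (⊤ : ℕ∞) u) (q : Fin 5 → ℝ) (i k : Fin 5) :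
    D2 u q i k = D2 u q k i :=
  second_derivative_symmetric (fun y => ((hu.differentiable (by simp)) y).hasFDerivAt)
    (((hu.fderiv_right (m := (⊤ : ℕ∞)) (by simp)).differentiable (by simp) q).hasFDerivAt) _ _

lemma pbracket_eq (α : ℝ) (hα : α ≠ 0) (f g : (Fin 5 → ℝ) → ℝ) (q : Fin 5 → ℝ) :
    pbracket α f g q =
      (1/α) * (D1 f q 0 * (q 2 * D1 g q 1 - q 1 * D1 g q 2)
        + D1 f q 1 * (q 0 * D1 g q 2 - q 2 * D1 g q 0)
        + D1 f q 2 * (q 1 * D1 g q 0 - q 0 * D1 g q 1))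
      + (D1 f q 3 * D1 g q 4 - D1 f q 4 * D1 g q 3) := by
  simp [pbracket, Jmat, Fin.sum_univ_five, Matrix.smul_apply, Matrix.cons_val_zero,
    Matrix.cons_val_one, Matrix.head_cons, Matrix.vecHead, Matrix.vecTail, Matrix.cons_val_succ,
    Function.comp, grad5, D1]
  field_simp
  ring

lemma hasFDerivAt_D1 {u : (Fin 5 → ℝ) → ℝ} (hu : ContDiff ℝ (⊤ : ℕ∞) u) (q : Fin 5 → ℝ) (i : Fin 5) :
    HasFDerivAt (fun p => fderiv ℝ u p (Pi.single i 1))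
      ((ContinuousLinearMap.apply ℝ ℝ (Pi.single i (1:ℝ))).comp (fderiv ℝ (fderiv ℝ u) q)) q :=
  ((ContinuousLinearMap.apply ℝ ℝ (Pi.single i (1:ℝ))) :
      ((Fin 5 → ℝ) →L[ℝ] ℝ) →L[ℝ] ℝ).hasFDerivAt.comp q
    ((hu.fderiv_right (m := (⊤ : ℕ∞)) (by simp)).differentiable (by simp) q).hasFDerivAt

lemma grad_pb (α : ℝ) (hα : α ≠ 0) {g h : (Fin 5 → ℝ) → ℝ}
    (hg : ContDiff ℝ (⊤ : ℕ∞) g) (hh : ContDiff ℝ (⊤ : ℕ∞) h) (q : Fin 5 → ℝ) (k : Fin 5) :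
    grad5 (pbracket α g h) q k =
      (1/α) * ( D2 g q 0 k * (q 2 * D1 h q 1 - q 1 * D1 h q 2)
        + D1 g q 0 * ((Pi.single k 1 : Fin 5 → ℝ) 2 * D1 h q 1 + q 2 * D2 h q 1 k
            - (Pi.single k 1 : Fin 5 → ℝ) 1 * D1 h q 2 - q 1 * D2 h q 2 k)
        + D2 g q 1 k * (q 0 * D1 h q 2 - q 2 * D1 h q 0)
        + D1 g q 1 * ((Pi.single k 1 : Fin 5 → ℝ) 0 * D1 h q 2 + q 0 * D2 h q 2 k
            - (Pi.single k 1 : Fin 5 → ℝ) 2 * D1 h q 0 - q 2 * D2 h q 0 k)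
        + D2 g q 2 k * (q 1 * D1 h q 0 - q 0 * D1 h q 1)
        + D1 g q 2 * ((Pi.single k 1 : Fin 5 → ℝ) 1 * D1 h q 0 + q 1 * D2 h q 0 k
            - (Pi.single k 1 : Fin 5 → ℝ) 0 * D1 h q 1 - q 0 * D2 h q 1 k) )
      + (D2 g q 3 k * D1 h q 4 + D1 g q 3 * D2 h q 4 k
          - D2 g q 4 k * D1 h q 3 - D1 g q 4 * D2 h q 3 k) := by
  have hrw : pbracket α g h = fun p =>
      (1/α) * ((fderiv ℝ g p (Pi.single 0 1)) * (p 2 * (fderiv ℝ h p (Pi.single 1 1)) - p 1 * (fderiv ℝ h p (Pi.single 2 1)))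
        + (fderiv ℝ g p (Pi.single 1 1)) * (p 0 * (fderiv ℝ h p (Pi.single 2 1)) - p 2 * (fderiv ℝ h p (Pi.single 0 1)))
        + (fderiv ℝ g p (Pi.single 2 1)) * (p 1 * (fderiv ℝ h p (Pi.single 0 1)) - p 0 * (fderiv ℝ h p (Pi.single 1 1))))
      + ((fderiv ℝ g p (Pi.single 3 1)) * (fderiv ℝ h p (Pi.single 4 1))
          - (fderiv ℝ g p (Pi.single 4 1)) * (fderiv ℝ h p (Pi.single 3 1))) :=
    funext fun p => pbracket_eq α hα g h p
  have C : ∀ m : Fin 5, HasFDerivAt (fun p : Fin 5 → ℝ => p m)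
      (ContinuousLinearMap.proj m : (Fin 5 → ℝ) →L[ℝ] ℝ) q :=
    fun m => (ContinuousLinearMap.proj (R := ℝ) (φ := fun _ : Fin 5 => ℝ) m).hasFDerivAt
  have Hg := fun i => hasFDerivAt_D1 hg q i
  have Hh := fun i => hasFDerivAt_D1 hh q i
  have T1 := (Hg 0).mul (((C 2).mul (Hh 1)).sub ((C 1).mul (Hh 2)))
  have T2 := (Hg 1).mul (((C 0).mul (Hh 2)).sub ((C 2).mul (Hh 0)))
  have T3 := (Hg 2).mul (((C 1).mul (Hh 0)).sub ((C 0).mul (Hh 1)))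
  have T4 := ((Hg 3).mul (Hh 4)).sub ((Hg 4).mul (Hh 3))
  have big := (((T1.add T2).add T3).const_mul (1/α)).add T4
  show fderiv ℝ (pbracket α g h) q (Pi.single k 1) = _
  rw [hrw]
  erw [big.fderiv]
  simp only [ContinuousLinearMap.add_apply, ContinuousLinearMap.smul_apply,
    ContinuousLinearMap.coe_comp', Function.comp_apply, ContinuousLinearMap.apply_apply,
    ContinuousLinearMap.proj_apply, ContinuousLinearMap.coe_sub', Pi.sub_apply, Pi.mul_apply,
    smul_eq_mul, D1, D2]
  ring

set_option maxHeartbeats 2000000 in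
/-- For α ≠ 0 the bracket defined by J satisfies the Jacobi identity on smooth
functions, i.e. it is a Poisson bracket. -/
theorem Jmat_bracket_jacobi_identity (α : ℝ) (hα : α ≠ 0)
    (f g h : (Fin 5 → ℝ) → ℝ)
    (hf : ContDiff ℝ (⊤ : ℕ∞) f) (hg : ContDiff ℝ (⊤ : ℕ∞) g) (hh : ContDiff ℝ (⊤ : ℕ∞) h)
    (q : Fin 5 → ℝ) :
    pbracket α f (pbracket α g h) q + pbracket α g (pbracket α h f) q
      + pbracket α h (pbracket α f g) q = 0 := by
  have sf := D2_symm hf q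
  have sg := D2_symm hg q
  have sh := D2_symm hh q
  rw [pbracket_eq α hα f _ q, pbracket_eq α hα g _ q, pbracket_eq α hα h _ q]
  simp only [show ∀ u : (Fin 5 → ℝ) → ℝ, ∀ i, D1 u q i = grad5 u q i from fun u i => rfl]
  simp only [grad_pb α hα hg hh q, grad_pb α hα hh hf q, grad_pb α hα hf hg q]
  simp only [show ∀ u : (Fin 5 → ℝ) → ℝ, ∀ i, grad5 u q i = D1 u q i from fun u i => rfl]
  simp only [Pi.single_apply, Fin.isValue, Fin.reduceEq, reduceIte, one_mul, zero_mul,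
    mul_zero, mul_one, add_zero, zero_add, sub_zero, zero_sub, if_true, if_false]
  simp only [sf 1 0, sf 2 0, sf 2 1, sf 3 0, sf 3 1, sf 3 2, sf 4 0, sf 4 1, sf 4 2, sf 4 3,
    sg 1 0, sg 2 0, sg 2 1, sg 3 0, sg 3 1, sg 3 2, sg 4 0, sg 4 1, sg 4 2, sg 4 3,
    sh 1 0, sh 2 0, sh 2 1, sh 3 0, sh 3 1, sh 3 2, sh 4 0, sh 4 1, sh 4 2, sh 4 3]
  field_simp
  ring
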